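/- Assume Re(ν) > 0 and let ψ: (0,∞) → V be continuous and satisfy the Lewis equation at every x > 0. Define Q_0(x) = x^{−2ν−1}·ψ(1/x) − Σ_{n=0}^∞ (n+x)^{−2ν−1}·η(T(T')^n)^{−1}(ψ(1 + 1/(n+x))) for x > 0 (the series converges absolutely since Re(2ν+1) > 1 and ψ is bounded on [1,2]). Then Q_0(x+1) = η(T')·Q_0(x) for all x > 0. -/

import Mathlib

open Complex

/-!
The Lewis equation at `1/x`, transported by `η(T'T⁻¹)` (note `ST⁻¹ = T T'⁻¹`), reads
`x^s η(T') ψ(1/x) = x^s η(T'T⁻¹) ψ(1 + 1/x) + (x+1)^s ψ(1/(x+1))` with `s = -2ν-1`.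
The first term on the right is `η(T')` of the `n = 0` term of the series defining `Q₀(x)`,
and `η(T')` maps its `(n+1)`-st term to the `n`-th term of the series for `Q₀(x+1)`,
so the two series telescope into the identity. Absolute convergence holds because
`T'⁻¹ = S T S⁻¹` has finite order under `η`, so the operators `η(T T'ⁿ)⁻¹` take
finitely many values and are uniformly bounded.
-/

/-- `SL₂(ℤ)`. -/
abbrev SL2Z := Matrix.SpecialLinearGroup (Fin 2) ℤ

/-- The matrix `T = [[1,1],[0,1]]`. -/
def Tm : SL2Z := ⟨!![1, 1; 0, 1], by norm_num [Matrix.det_fin_two_of]⟩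

/-- The matrix `S = [[0,1],[−1,0]]`. -/
def Sm : SL2Z := ⟨!![0, 1; -1, 0], by norm_num [Matrix.det_fin_two_of]⟩

/-- The matrix `T' = [[1,0],[1,1]]`. -/
def Tm' : SL2Z := ⟨!![1, 0; 1, 1], by norm_num [Matrix.det_fin_two_of]⟩

/-- The matrix `−I`. -/
def negI : SL2Z := ⟨!![-1, 0; 0, -1], by norm_num [Matrix.det_fin_two_of]⟩

/-- `ψ : (0,∞) → V` satisfies the Lewis equation with parameter `ν` at `x`. -/
def LewisEqR {V : Type*} [NormedAddCommGroup V] [NormedSpace ℂ V]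
    (η : SL2Z →* Module.End ℂ V) (ν : ℂ) (ψ : ℝ → V) (x : ℝ) : Prop :=
  η Tm (ψ x) =
    ψ (x + 1) +
      ((((x : ℂ) + 1)) ^ (-2 * ν - 1)) • η (Sm * Tm⁻¹) (ψ (x / (x + 1)))

lemma Tm'_inv_eq_conj : Tm'⁻¹ = Sm * Tm * Sm⁻¹ := by
  simp only [Matrix.SpecialLinearGroup.SL2_inv_expl]
  ext i j
  fin_cases i <;> fin_cases j <;> rfl

lemma Sm_mul_Tm_inv : Sm * Tm⁻¹ = Tm * Tm'⁻¹ := by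
  simp only [Matrix.SpecialLinearGroup.SL2_inv_expl]
  ext i j
  fin_cases i <;> fin_cases j <;> rfl

lemma Tm_mul_Tm'_pow_inv (n : ℕ) : (Tm * Tm' ^ n)⁻¹ = Tm'⁻¹ ^ n * Tm⁻¹ := by
  rw [mul_inv_rev, inv_pow]

lemma Tm'_mul_Tm_mul_Tm'_pow_succ_inv (n : ℕ) :
    Tm' * (Tm * Tm' ^ (n + 1))⁻¹ = (Tm * Tm' ^ n)⁻¹ := by
  rw [pow_succ]
  group

lemma Tm'_inv_pow_mem_ker {M : Type*} [Monoid M] (η : SL2Z →* M) {N : ℕ}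
    (hord : η Tm ^ N = 1) : Tm'⁻¹ ^ N ∈ η.ker := by
  rw [Tm'_inv_eq_conj, conj_pow]
  exact η.normal_ker.conj_mem _ (by rwa [MonoidHom.mem_ker, map_pow]) Sm

lemma finite_range_map_Tm_mul_Tm'_pow_inv {M : Type*} [Monoid M] (η : SL2Z →* M) {N : ℕ}
    (hN : 0 < N) (hord : η Tm ^ N = 1) :
    (Set.range fun n : ℕ => η ((Tm * Tm' ^ n)⁻¹)).Finite := by
  have hfin : IsOfFinOrder (η Tm'⁻¹) := isOfFinOrder_iff_pow_eq_one.mpr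
    ⟨N, hN, by rw [← map_pow]; exact Tm'_inv_pow_mem_ker η hord⟩
  have hrange : (Set.range fun n : ℕ => η ((Tm * Tm' ^ n)⁻¹)) =
      (· * η Tm⁻¹) '' (Submonoid.powers (η Tm'⁻¹) : Set M) := by
    rw [Submonoid.coe_powers, ← Set.range_comp]
    congr 1
    ext n
    simp only [Function.comp_apply, Tm_mul_Tm'_pow_inv, map_mul, map_pow]
  rw [hrange]
  exact hfin.finite_powers.image _

lemma exists_forall_norm_apply_le_of_finite_range {𝕜 V ι : Type*} [NontriviallyNormedField 𝕜]
    [CompleteSpace 𝕜] [NormedAddCommGroup V] [NormedSpace 𝕜 V] [FiniteDimensional 𝕜 V]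
    {A : ι → Module.End 𝕜 V} (hA : (Set.range A).Finite) :
    ∃ C, 0 ≤ C ∧ ∀ i v, ‖A i v‖ ≤ C * ‖v‖ := by
  obtain ⟨C, hC⟩ := (hA.image fun T => ‖LinearMap.toContinuousLinearMap T‖).bddAbove
  refine ⟨max C 0, le_max_right _ _, fun i v => ?_⟩
  calc ‖A i v‖ = ‖LinearMap.toContinuousLinearMap (A i) v‖ := rfl
    _ ≤ ‖LinearMap.toContinuousLinearMap (A i)‖ * ‖v‖ := ContinuousLinearMap.le_opNorm _ _
    _ ≤ max C 0 * ‖v‖ := by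
      gcongr
      exact le_max_of_le_left (hC ⟨A i, ⟨i, rfl⟩, rfl⟩)

lemma summable_norm_cpow_smul_of_bounded {E : Type*} [NormedAddCommGroup E] [NormedSpace ℂ E]
    {s : ℂ} (hs : s.re < -1) {x : ℝ} (hx : 0 < x) {g : ℕ → E} {B : ℝ}
    (hg : ∀ n, ‖g n‖ ≤ B) :
    Summable fun n : ℕ => ‖((((n : ℝ) + x : ℝ) : ℂ)) ^ s • g n‖ := by
  have hpos (n : ℕ) : 0 < (n : ℝ) + x := by positivity
  have hbase : Summable fun n : ℕ => ((n : ℝ) + x) ^ s.re :=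
    ((Real.summable_one_div_nat_add_rpow x (-s.re)).mpr (by linarith)).congr fun n => by
      rw [abs_of_pos (hpos n), one_div, ← Real.rpow_neg (hpos n).le, neg_neg]
  refine (hbase.mul_right B).of_nonneg_of_le (fun n => norm_nonneg _) fun n => ?_
  rw [norm_smul, Complex.norm_cpow_eq_rpow_re_of_pos (hpos n)]
  gcongr
  exact hg n

lemma ofReal_cpow_mul_inv_add_one_cpow {x : ℝ} (hx : 0 < x) (s : ℂ) :
    (x : ℂ) ^ s * (((1 / x : ℝ) : ℂ) + 1) ^ s = ((x + 1 : ℝ) : ℂ) ^ s := by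
  have hb : ((1 / x : ℝ) : ℂ) + 1 = (((x + 1) / x : ℝ) : ℂ) := by
    have hx0 : (x : ℂ) ≠ 0 := ofReal_ne_zero.mpr hx.ne'
    push_cast
    rw [add_div, div_self hx0, add_comm]
  rw [hb, ← Complex.mul_cpow_ofReal_nonneg hx.le (by positivity), ← Complex.ofReal_mul,
    mul_div_cancel₀ _ hx.ne']

section Lewis

variable {V : Type*} [NormedAddCommGroup V] [NormedSpace ℂ V]
  (η : SL2Z →* Module.End ℂ V) (ν : ℂ) (ψ : ℝ → V)

noncomputable def q0SeriesTerm (n : ℕ) (x : ℝ) : V :=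
  ((((n : ℝ) + x : ℝ) : ℂ)) ^ (-2 * ν - 1) • η ((Tm * Tm' ^ n)⁻¹) (ψ (1 + 1 / ((n : ℝ) + x)))

lemma map_Tm'_q0SeriesTerm_succ (n : ℕ) (x : ℝ) :
    η Tm' (q0SeriesTerm η ν ψ (n + 1) x) = q0SeriesTerm η ν ψ n (x + 1) := by
  rw [q0SeriesTerm, q0SeriesTerm, map_smul, ← Module.End.mul_apply, ← map_mul,
    Tm'_mul_Tm_mul_Tm'_pow_succ_inv]
  push_cast
  ring_nf

lemma map_Tm'_q0SeriesTerm_zero (x : ℝ) :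
    η Tm' (q0SeriesTerm η ν ψ 0 x) =
      (x : ℂ) ^ (-2 * ν - 1) • η (Tm' * Tm⁻¹) (ψ (1 + 1 / x)) := by
  rw [q0SeriesTerm, map_smul, ← Module.End.mul_apply, ← map_mul]
  simp

lemma summable_norm_q0SeriesTerm [FiniteDimensional ℂ V] {N : ℕ} (hN : 0 < N)
    (hord : η Tm ^ N = 1) (hν : 0 < ν.re) (hψ : ContinuousOn ψ (Set.Ioi 0))
    {x : ℝ} (hx : 0 < x) :
    Summable fun n : ℕ => ‖q0SeriesTerm η ν ψ n x‖ := by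
  obtain ⟨C, hC0, hC⟩ :=
    exists_forall_norm_apply_le_of_finite_range (finite_range_map_Tm_mul_Tm'_pow_inv η hN hord)
  obtain ⟨M, hM⟩ := (isCompact_Icc (a := (1 : ℝ)) (b := 1 + 1 / x)).exists_bound_of_continuousOn
    (hψ.mono fun y hy => one_pos.trans_le hy.1)
  have hmem (n : ℕ) : 1 + 1 / ((n : ℝ) + x) ∈ Set.Icc (1 : ℝ) (1 + 1 / x) := by
    constructor
    · have : 0 < 1 / ((n : ℝ) + x) := by positivity
      linarith
    · gcongr
      linarith [n.cast_nonneg (α := ℝ)]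
  have hs : (-2 * ν - 1).re < -1 := by
    simp only [neg_mul, sub_re, neg_re, mul_re, re_ofNat, im_ofNat, zero_mul, sub_zero, one_re]
    linarith
  refine summable_norm_cpow_smul_of_bounded (B := C * M) hs hx fun n => ?_
  exact (hC n _).trans (mul_le_mul_of_nonneg_left (hM _ (hmem n)) hC0)

lemma map_Tm'_tsum_q0SeriesTerm [FiniteDimensional ℂ V] {x : ℝ}
    (hsum : Summable fun n : ℕ => q0SeriesTerm η ν ψ n x) :
    η Tm' (∑' n, q0SeriesTerm η ν ψ n x) =
      η Tm' (q0SeriesTerm η ν ψ 0 x) + ∑' n, q0SeriesTerm η ν ψ n (x + 1) := by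
  have hmap := (LinearMap.toContinuousLinearMap (η Tm')).map_tsum hsum
  rw [LinearMap.coe_toContinuousLinearMap'] at hmap
  have hsum' : Summable fun n => η Tm' (q0SeriesTerm η ν ψ n x) :=
    (LinearMap.toContinuousLinearMap (η Tm')).summable hsum
  rw [hmap, hsum'.tsum_eq_zero_add]
  simp only [map_Tm'_q0SeriesTerm_succ]

lemma LewisEqR.smul_map_Tm' {x : ℝ} (hx : 0 < x) (h : LewisEqR η ν ψ (1 / x)) :
    (x : ℂ) ^ (-2 * ν - 1) • η Tm' (ψ (1 / x)) =
      (x : ℂ) ^ (-2 * ν - 1) • η (Tm' * Tm⁻¹) (ψ (1 + 1 / x)) +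
        ((x + 1 : ℝ) : ℂ) ^ (-2 * ν - 1) • ψ (1 / (x + 1)) := by
  have h' := congrArg (η (Tm' * Tm⁻¹)) h
  rw [map_add, map_smul, ← Module.End.mul_apply, ← map_mul, ← Module.End.mul_apply, ← map_mul,
    Sm_mul_Tm_inv, show Tm' * Tm⁻¹ * Tm = Tm' by group,
    show Tm' * Tm⁻¹ * (Tm * Tm'⁻¹) = 1 by group, map_one, Module.End.one_apply] at h'
  have harg : 1 / x / (1 / x + 1) = 1 / (x + 1) := by field_simp; ring
  rw [h', harg, add_comm (1 / x) 1, smul_add, smul_smul, ofReal_cpow_mul_inv_add_one_cpow hx]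

end Lewis

theorem stmt11_general {V : Type*} [NormedAddCommGroup V] [NormedSpace ℂ V]
    [FiniteDimensional ℂ V]
    (η : SL2Z →* Module.End ℂ V)
    (N : ℕ) (hN : 0 < N) (hord : η Tm ^ N = 1)
    (ν : ℂ) (hν : 0 < ν.re)
    (ψ : ℝ → V) (hψcont : ContinuousOn ψ (Set.Ioi (0 : ℝ)))
    (hψlewis : ∀ x : ℝ, 0 < x → LewisEqR η ν ψ x)
    (Q0 : ℝ → V)
    (hQ0 : ∀ x : ℝ, 0 < x →
      Q0 x = (((x : ℂ)) ^ (-2 * ν - 1)) • ψ (1 / x) -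
        ∑' n : ℕ, (((((n : ℝ) + x : ℝ) : ℂ)) ^ (-2 * ν - 1)) •
          η ((Tm * Tm' ^ n)⁻¹) (ψ (1 + 1 / ((n : ℝ) + x)))) :
    (∀ x : ℝ, 0 < x →
      Summable (fun n : ℕ => ‖(((((n : ℝ) + x : ℝ) : ℂ)) ^ (-2 * ν - 1)) •
        η ((Tm * Tm' ^ n)⁻¹) (ψ (1 + 1 / ((n : ℝ) + x)))‖)) ∧
    ∀ x : ℝ, 0 < x → Q0 (x + 1) = η Tm' (Q0 x) := by
  have hsum (x : ℝ) (hx : 0 < x) : Summable fun n : ℕ => ‖q0SeriesTerm η ν ψ n x‖ :=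
    summable_norm_q0SeriesTerm η ν ψ hN hord hν hψcont hx
  refine ⟨hsum, fun x hx => ?_⟩
  have hQ (y : ℝ) (hy : 0 < y) :
      Q0 y = (y : ℂ) ^ (-2 * ν - 1) • ψ (1 / y) - ∑' n, q0SeriesTerm η ν ψ n y :=
    hQ0 y hy
  rw [hQ (x + 1) (by linarith), hQ x hx, map_sub, map_smul,
    map_Tm'_tsum_q0SeriesTerm η ν ψ (hsum x hx).of_norm, map_Tm'_q0SeriesTerm_zero,
    (hψlewis (1 / x) (by positivity)).smul_map_Tm' η ν ψ hx]
  abel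

/-- If `Re(ν) > 0` and `ψ` is continuous on `(0,∞)` and satisfies the Lewis
equation there, then
`Q₀(x) = x^{−2ν−1}ψ(1/x) − Σ_{n≥0} (n+x)^{−2ν−1} η(T(T')ⁿ)⁻¹ ψ(1+1/(n+x))`
(an absolutely convergent series) satisfies `Q₀(x+1) = η(T')·Q₀(x)` for `x > 0`. -/
theorem stmt11 {V : Type*} [NormedAddCommGroup V] [NormedSpace ℂ V]
    [FiniteDimensional ℂ V] [Nontrivial V]
    (η : SL2Z →* Module.End ℂ V) (hη : η negI = 1)
    (N : ℕ) (hN : 0 < N) (hord : η Tm ^ N = 1)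
    (ν : ℂ) (hν : 0 < ν.re)
    (ψ : ℝ → V) (hψcont : ContinuousOn ψ (Set.Ioi (0 : ℝ)))
    (hψlewis : ∀ x : ℝ, 0 < x → LewisEqR η ν ψ x)
    (Q0 : ℝ → V)
    (hQ0 : ∀ x : ℝ, 0 < x →
      Q0 x = (((x : ℂ)) ^ (-2 * ν - 1)) • ψ (1 / x) -
        ∑' n : ℕ, (((((n : ℝ) + x : ℝ) : ℂ)) ^ (-2 * ν - 1)) •
          η ((Tm * Tm' ^ n)⁻¹) (ψ (1 + 1 / ((n : ℝ) + x)))) :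
    (∀ x : ℝ, 0 < x →
      Summable (fun n : ℕ => ‖(((((n : ℝ) + x : ℝ) : ℂ)) ^ (-2 * ν - 1)) •
        η ((Tm * Tm' ^ n)⁻¹) (ψ (1 + 1 / ((n : ℝ) + x)))‖)) ∧
    ∀ x : ℝ, 0 < x → Q0 (x + 1) = η Tm' (Q0 x) :=
  stmt11_general η N hN hord ν hν ψ hψcont hψlewis Q0 hQ0
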